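/- For every 0 ≤ d ≤ n−3, the number of critical cubes of Ω_n of dimension d equals the binomial coefficient C(n,d). -/

import Mathlib

/-- A (potential) cube of the cubical complex `Ω_n`: an ordered 4-tuple of finite
subsets of `ℕ`. -/
structure Cube where
  A : Finset ℕ
  B : Finset ℕ
  C : Finset ℕ
  D : Finset ℕ
deriving DecidableEq

/-- `σ` is a cube of `Ω_n`: the four parts are pairwise disjoint, their union is
`[n] = {1,…,n}`, and `A`, `C` are nonempty. -/
def IsCube (n : ℕ) (σ : Cube) : Prop :=
  Disjoint σ.A σ.B ∧ Disjoint σ.A σ.C ∧ Disjoint σ.A σ.D ∧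
  Disjoint σ.B σ.C ∧ Disjoint σ.B σ.D ∧ Disjoint σ.C σ.D ∧
  σ.A ∪ σ.B ∪ σ.C ∪ σ.D = Finset.Icc 1 n ∧
  σ.A.Nonempty ∧ σ.C.Nonempty

/-- The dimension of a cube, `|B| + |D|`. -/
def Cube.dim (σ : Cube) : ℕ := σ.B.card + σ.D.card

/-- The pivot `α(σ) = min (A ∪ B)`. -/
noncomputable def Cube.alpha (σ : Cube) : ℕ := sInf (↑(σ.A ∪ σ.B) : Set ℕ)

/-- The pivot `β(σ) = max (B ∪ C)`. -/
noncomputable def Cube.beta (σ : Cube) : ℕ := sSup (↑(σ.B ∪ σ.C) : Set ℕ)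

def M1up (σ : Cube) : Prop := σ.alpha ∈ σ.B
def M1down (σ : Cube) : Prop := σ.alpha ∈ σ.A ∧ 2 ≤ σ.A.card
def M2up (σ : Cube) : Prop := σ.A = {σ.alpha} ∧ σ.beta ∈ σ.B
def M2down (σ : Cube) : Prop :=
  σ.A = {σ.alpha} ∧ σ.beta ∈ σ.C ∧ 2 ≤ σ.C.card ∧ σ.alpha < σ.beta
def Mdown (σ : Cube) : Prop := M1down σ ∨ M2down σ
def Mup (σ : Cube) : Prop := M1up σ ∨ M2up σ
def Critical (σ : Cube) : Prop := ¬ Mdown σ ∧ ¬ Mup σ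

/-- The covering relation: `τ` is obtained from `σ` by moving exactly one element
of `B(σ) ∪ D(σ)` into `A(σ)` or into `C(σ)`. -/
def Covers (σ τ : Cube) : Prop :=
  (∃ x ∈ σ.B, τ = ⟨insert x σ.A, σ.B.erase x, σ.C, σ.D⟩) ∨
  (∃ x ∈ σ.B, τ = ⟨σ.A, σ.B.erase x, insert x σ.C, σ.D⟩) ∨
  (∃ x ∈ σ.D, τ = ⟨insert x σ.A, σ.B, σ.C, σ.D.erase x⟩) ∨
  (∃ x ∈ σ.D, τ = ⟨σ.A, σ.B, insert x σ.C, σ.D.erase x⟩)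

open Classical in
/-- The matching `μ₊ : M↓ → M↑`. -/
noncomputable def muPlus (σ : Cube) : Cube :=
  if M1down σ then ⟨σ.A.erase σ.alpha, insert σ.alpha σ.B, σ.C, σ.D⟩
  else ⟨σ.A, insert σ.beta σ.B, σ.C.erase σ.beta, σ.D⟩


/-!
Avoiding `M₁↑` puts `α` in `A`, and then avoiding `M₁↓` forces `A = {α}`; avoiding `M₂↑` puts `β`
in `C`. When `|C| ≥ 2`, which `dim σ ≤ n - 3` forces, avoiding `M₂↓` means `β < α`; since every
element of `B` lies between `α` and `β`, `B` is empty and `α` is the largest element of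
`A ∪ C = [n] \ D`. So a critical cube of dimension `d` is determined by its `d`-element part `D`,
and conversely every `d`-subset of `[n]` is the `D`-part of such a cube.
-/

open Finset

namespace Cube

variable {σ : Cube} {x : ℕ}

lemma alpha_mem (h : (σ.A ∪ σ.B).Nonempty) : σ.alpha ∈ σ.A ∪ σ.B :=
  Nat.sInf_mem (coe_nonempty.mpr h)

lemma alpha_le (hx : x ∈ σ.A ∪ σ.B) : σ.alpha ≤ x :=
  Nat.sInf_le hx

lemma beta_mem (h : (σ.B ∪ σ.C).Nonempty) : σ.beta ∈ σ.B ∪ σ.C :=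
  h.csSup_mem

lemma le_beta (hx : x ∈ σ.B ∪ σ.C) : x ≤ σ.beta :=
  le_csSup (Finset.bddAbove _) hx

lemma alpha_mem_A_of_not_M1up (hA : σ.A.Nonempty) (hσ : ¬ M1up σ) : σ.alpha ∈ σ.A :=
  (mem_union.mp (alpha_mem (hA.mono subset_union_left))).resolve_right hσ

lemma beta_mem_C_of_not_M2up (hC : σ.C.Nonempty) (hA : σ.A = {σ.alpha}) (hσ : ¬ M2up σ) :
    σ.beta ∈ σ.C :=
  (mem_union.mp (beta_mem (hC.mono subset_union_right))).resolve_left fun hβ => hσ ⟨hA, hβ⟩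

end Cube

noncomputable def criticalCube (n : ℕ) (D : Finset ℕ) : Cube :=
  ⟨{sSup (↑(Icc 1 n \ D) : Set ℕ)}, ∅, (Icc 1 n \ D).erase (sSup (↑(Icc 1 n \ D) : Set ℕ)), D⟩

section criticalCube

variable {n : ℕ} {D : Finset ℕ}

lemma criticalCube_injective : Function.Injective (criticalCube n) :=
  fun _ _ h => congrArg Cube.D h

lemma criticalCube_dim : (criticalCube n D).dim = #D := by
  simp [Cube.dim, criticalCube]

lemma criticalCube_alpha : (criticalCube n D).alpha = sSup (↑(Icc 1 n \ D) : Set ℕ) := by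
  simp [Cube.alpha, criticalCube]

lemma criticalCube_critical : Critical (criticalCube n D) := by
  refine ⟨?_, ?_⟩
  · rintro (⟨-, hA⟩ | ⟨-, hβ, -, hαβ⟩)
    · simp [criticalCube] at hA
    · rw [criticalCube_alpha] at hαβ
      have hβS : (criticalCube n D).beta ∈ Icc 1 n \ D := mem_of_mem_erase hβ
      exact ne_of_mem_erase hβ <| le_antisymm (le_csSup (Finset.bddAbove _) hβS) hαβ.le
  · rintro (hα | ⟨-, hβ⟩)
    · simp [M1up, criticalCube] at hα
    · simp [criticalCube] at hβ

lemma criticalCube_isCube (hD : D ⊆ Icc 1 n) (hcard : #D + 2 ≤ n) :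
    IsCube n (criticalCube n D) := by
  set S := Icc 1 n \ D with hS
  have hScard : 2 ≤ #S := by
    rw [hS, card_sdiff_of_subset hD, Nat.card_Icc]
    omega
  have hm : sSup (↑S : Set ℕ) ∈ S := (card_pos.mp (by omega)).csSup_mem
  have hSD : Disjoint S D := sdiff_disjoint
  refine ⟨by simp [criticalCube], by simp [criticalCube], ?_, by simp [criticalCube],
    by simp [criticalCube], hSD.mono_left (erase_subset _ _), ?_, by simp [criticalCube], ?_⟩
  · exact disjoint_singleton_left.mpr (disjoint_left.mp hSD hm)
  · change {sSup (↑S : Set ℕ)} ∪ ∅ ∪ S.erase (sSup (↑S : Set ℕ)) ∪ D = Icc 1 n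
    rw [union_empty, ← insert_eq, insert_erase hm, sdiff_union_of_subset hD]
  · change (S.erase _).Nonempty
    exact card_pos.mp (by rw [card_erase_of_mem hm]; omega)

end criticalCube

namespace IsCube

variable {n : ℕ} {σ : Cube}

lemma D_subset (h : IsCube n σ) : σ.D ⊆ Icc 1 n := by
  obtain ⟨-, -, -, -, -, -, hU, -, -⟩ := h
  exact hU ▸ subset_union_right

lemma card_parts (h : IsCube n σ) : #σ.A + #σ.B + #σ.C + #σ.D = n := by
  obtain ⟨hAB, hAC, hAD, hBC, hBD, hCD, hU, -, -⟩ := h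
  rw [← card_union_of_disjoint hAB,
    ← card_union_of_disjoint (disjoint_union_left.mpr ⟨hAC, hBC⟩),
    ← card_union_of_disjoint (disjoint_union_left.mpr ⟨disjoint_union_left.mpr ⟨hAD, hBD⟩, hCD⟩),
    hU, Nat.card_Icc, Nat.add_sub_cancel]

lemma alpha_mem_A (h : IsCube n σ) (hσ : Critical σ) : σ.alpha ∈ σ.A :=
  Cube.alpha_mem_A_of_not_M1up h.2.2.2.2.2.2.2.1 fun h' => hσ.2 (Or.inl h')

lemma A_eq_singleton_alpha (h : IsCube n σ) (hσ : Critical σ) : σ.A = {σ.alpha} := by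
  have hα := h.alpha_mem_A hσ
  have hA : #σ.A ≤ 1 := by
    by_contra! hA
    exact hσ.1 (Or.inl ⟨hα, hA⟩)
  exact eq_singleton_iff_unique_mem.mpr ⟨hα, fun x hx => card_le_one.mp hA x hx _ hα⟩

lemma beta_mem_C (h : IsCube n σ) (hσ : Critical σ) : σ.beta ∈ σ.C :=
  Cube.beta_mem_C_of_not_M2up h.2.2.2.2.2.2.2.2 (h.A_eq_singleton_alpha hσ)
    fun h' => hσ.2 (Or.inr h')

lemma two_le_card_C (h : IsCube n σ) (hσ : Critical σ) (hdim : σ.dim + 3 ≤ n) : 2 ≤ #σ.C := by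
  have hparts := h.card_parts
  rw [h.A_eq_singleton_alpha hσ, card_singleton] at hparts
  unfold Cube.dim at hdim
  omega

lemma beta_lt_alpha (h : IsCube n σ) (hσ : Critical σ) (hdim : σ.dim + 3 ≤ n) :
    σ.beta < σ.alpha := by
  have hβ := h.beta_mem_C hσ
  have hne : σ.beta ≠ σ.alpha := fun he => disjoint_left.mp h.2.1 (h.alpha_mem_A hσ) (he ▸ hβ)
  have hnlt : ¬ σ.alpha < σ.beta := fun hlt =>
    hσ.1 (Or.inr ⟨h.A_eq_singleton_alpha hσ, hβ, h.two_le_card_C hσ hdim, hlt⟩)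
  omega

lemma B_eq_empty (h : IsCube n σ) (hσ : Critical σ) (hdim : σ.dim + 3 ≤ n) : σ.B = ∅ :=
  eq_empty_of_forall_notMem fun _ hb =>
    (h.beta_lt_alpha hσ hdim).not_ge <|
      (Cube.alpha_le (mem_union_right _ hb)).trans (Cube.le_beta (mem_union_left _ hb))

lemma eq_criticalCube (h : IsCube n σ) (hσ : Critical σ) (hdim : σ.dim + 3 ≤ n) :
    σ = criticalCube n σ.D := by
  have hA := h.A_eq_singleton_alpha hσ
  have hB := h.B_eq_empty hσ hdim
  have hβα := h.beta_lt_alpha hσ hdim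
  obtain ⟨-, hAC, hAD, -, -, hCD, hU, -, -⟩ := h
  have hαC : σ.alpha ∉ σ.C := disjoint_left.mp hAC (hA ▸ mem_singleton_self _)
  have hS : Icc 1 n \ σ.D = insert σ.alpha σ.C := by
    rw [← hU, hB, union_empty, union_sdiff_cancel_right (disjoint_union_left.mpr ⟨hAD, hCD⟩),
      hA, insert_eq]
  have hmax : sSup (↑(insert σ.alpha σ.C) : Set ℕ) = σ.alpha := by
    refine IsGreatest.csSup_eq ⟨by simp, fun x hx => ?_⟩
    rcases mem_insert.mp hx with rfl | hx
    · exact le_rfl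
    · exact ((Cube.le_beta (mem_union_right _ hx)).trans_lt hβα).le
  unfold criticalCube
  rw [hS, hmax, erase_insert hαC, ← hA, ← hB]

end IsCube

theorem count_critical_low_general (n d : ℕ) (hd : d + 3 ≤ n) :
    {σ : Cube | IsCube n σ ∧ Critical σ ∧ σ.dim = d}.ncard = n.choose d := by
  have hset : {σ : Cube | IsCube n σ ∧ Critical σ ∧ σ.dim = d}
      = ((Icc 1 n).powersetCard d).image (criticalCube n) := by
    ext σ
    simp only [Set.mem_ofPred_eq, coe_image, Set.mem_image, mem_coe, mem_powersetCard]
    constructor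
    · rintro ⟨hσ, hcrit, rfl⟩
      have heq := hσ.eq_criticalCube hcrit hd
      refine ⟨σ.D, ⟨hσ.D_subset, ?_⟩, heq.symm⟩
      rw [← criticalCube_dim (n := n), ← heq]
    · rintro ⟨D, ⟨hD, rfl⟩, rfl⟩
      exact ⟨criticalCube_isCube hD (by omega), criticalCube_critical, criticalCube_dim⟩
  rw [hset, Set.ncard_coe_finset, card_image_of_injective _ criticalCube_injective,
    card_powersetCard, Nat.card_Icc, Nat.add_sub_cancel]

/-- For `0 ≤ d ≤ n−3`, the number of critical cubes of `Ω_n` of dimension `d`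
equals the binomial coefficient `C(n,d)`. -/
theorem count_critical_low (n d : ℕ) (hn : 2 ≤ n) (hd : d + 3 ≤ n) :
    {σ : Cube | IsCube n σ ∧ Critical σ ∧ σ.dim = d}.ncard = n.choose d :=
  count_critical_low_general n d hd
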